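/- The induction axiom IND is valid: for every chain θ ∈ Θ with last agent i and every formula φ for which the displayed formula is in the language, ⊨ C_θ(φ → [≈]_θ I_i φ) → (φ → C_θφ). -/

import Mathlib

namespace ALPC

/-- A chain of belief for awareness: a nonempty finite sequence of agents. -/
def Chain (G : Type) : Type := {l : List G // l ≠ []}

/-- The last agent of a chain. -/
def Chain.last {G : Type} (θ : Chain G) : G := θ.val.getLast θ.prop

/-- Concatenation of chains. -/
def Chain.append {G : Type} (θ θ' : Chain G) : Chain G :=
  ⟨θ.val ++ θ'.val, by cases θ; cases θ'; simp_all⟩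

/-- The order ⪯ on chains: the partial order generated by the conditions that
θ ⪯ θ·θ'' and that a chain with two adjacent occurrences of the same agent is
equivalent (related in both directions) to the chain with one of them removed. -/
inductive ChainLE {G : Type} : Chain G → Chain G → Prop
  | refl (θ : Chain G) : ChainLE θ θ
  | ext (θ θ'' : Chain G) : ChainLE θ (θ.append θ'')
  | dup_le (pre suf : List G) (a : G) :
      ChainLE ⟨pre ++ a :: a :: suf, by simp⟩ ⟨pre ++ a :: suf, by simp⟩
  | dup_ge (pre suf : List G) (a : G) :
      ChainLE ⟨pre ++ a :: suf, by simp⟩ ⟨pre ++ a :: a :: suf, by simp⟩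
  | trans {θ₁ θ₂ θ₃ : Chain G} : ChainLE θ₁ θ₂ → ChainLE θ₂ θ₃ → ChainLE θ₁ θ₃

/-- Formulas of the language: atoms, negation, conjunction, implicit knowledge I_i,
the operator [≈]_θ (`box`), the operator C_θ, awareness A_θ and explicit knowledge E_θ. -/
inductive Formula (P G : Type) : Type
  | atom : P → Formula P G
  | neg : Formula P G → Formula P G
  | and : Formula P G → Formula P G → Formula P G
  | K : G → Formula P G → Formula P G
  | box : Chain G → Formula P G → Formula P G
  | C : Chain G → Formula P G → Formula P G
  | A : Chain G → Formula P G → Formula P G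
  | E : Chain G → Formula P G → Formula P G

variable {P G : Type}

/-- Material implication, defined from ¬ and ∧. -/
def Formula.imp (φ ψ : Formula P G) : Formula P G := (φ.and ψ.neg).neg

/-- Biconditional. -/
def Formula.iff (φ ψ : Formula P G) : Formula P G := (φ.imp ψ).and (ψ.imp φ)

/-- At(φ): the set of atomic propositions occurring in φ. -/
def Formula.At : Formula P G → Set P
  | .atom p => {p}
  | .neg φ => φ.At
  | .and φ ψ => φ.At ∪ ψ.At
  | .K _ φ => φ.At
  | .box _ φ => φ.At
  | .C _ φ => φ.At
  | .A _ φ => φ.At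
  | .E _ φ => φ.At

/-- The set of chains occurring as operator subscripts in a formula. -/
def Formula.chains : Formula P G → Set (Chain G)
  | .atom _ => ∅
  | .neg φ => φ.chains
  | .and φ ψ => φ.chains ∪ ψ.chains
  | .K _ φ => φ.chains
  | .box θ φ => insert θ φ.chains
  | .C θ φ => insert θ φ.chains
  | .A θ φ => insert θ φ.chains
  | .E θ φ => insert θ φ.chains

/-- Well-formedness: φ belongs to the language 𝓛_(P,G,Θ); every operator subscript
is a chain in Θ, and in A_θ φ and E_θ φ every operator subscript θ' occurring in φ
satisfies θ ⪯ θ'. -/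
def WF (Θ : Set (Chain G)) : Formula P G → Prop
  | .atom _ => True
  | .neg φ => WF Θ φ
  | .and φ ψ => WF Θ φ ∧ WF Θ ψ
  | .K _ φ => WF Θ φ
  | .box θ φ => θ ∈ Θ ∧ WF Θ φ
  | .C θ φ => θ ∈ Θ ∧ WF Θ φ
  | .A θ φ => θ ∈ Θ ∧ WF Θ φ ∧ ∀ θ' ∈ φ.chains, ChainLE θ θ'
  | .E θ φ => θ ∈ Θ ∧ WF Θ φ ∧ ∀ θ' ∈ φ.chains, ChainLE θ θ'

/-- The raw data of a Kripke-style model for the language. -/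
structure RawModel (P G : Type) where
  W : Type
  sim : G → W → W → Prop
  V : P → Set W
  Aw : Chain G → Set P

/-- The indistinguishable relation ≈_θ induced by the awareness set 𝒜_θ. -/
def RawModel.indist (M : RawModel P G) (θ : Chain G) (w v : M.W) : Prop :=
  ∀ p ∈ M.Aw θ, (w ∈ M.V p ↔ v ∈ M.V p)

/-- The transitive closure of ∼_i ∘ ≈_θ (i the last agent of θ), where
(x,y) ∈ ∼_i ∘ ≈_θ iff there is u with x ≈_θ u and u ∼_i y. -/
def RawModel.creach (M : RawModel P G) (θ : Chain G) : M.W → M.W → Prop :=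
  Relation.TransGen (fun x y => ∃ u, M.indist θ x u ∧ M.sim θ.last u y)

/-- The satisfaction relation M,w ⊨ φ. -/
def Sat (M : RawModel P G) : Formula P G → M.W → Prop
  | .atom p, w => w ∈ M.V p
  | .neg φ, w => ¬ Sat M φ w
  | .and φ ψ, w => Sat M φ w ∧ Sat M ψ w
  | .K i φ, w => ∀ v, M.sim i w v → Sat M φ v
  | .box θ φ, w => ∀ v, M.indist θ w v → Sat M φ v
  | .C θ φ, w => ∀ v, M.creach θ w v → Sat M φ v
  | .A θ φ, _ => Formula.At φ ⊆ M.Aw θ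
  | .E θ φ, w => Formula.At φ ⊆ M.Aw θ ∧ ∀ v, M.creach θ w v → Sat M φ v

/-- An epistemic model with awareness: a nonempty set of worlds, equivalence
relations ∼_i, a valuation, and nonempty awareness sets 𝒜_θ (θ ∈ Θ) with
𝒜_θ ⊆ 𝒜_θ' whenever θ' ⪯ θ. -/
structure AwModel (P G : Type) (Θ : Set (Chain G)) extends RawModel P G where
  W_ne : Nonempty W
  sim_equiv : ∀ i : G, Equivalence (sim i)
  Aw_ne : ∀ θ ∈ Θ, (Aw θ).Nonempty
  Aw_mono : ∀ θ ∈ Θ, ∀ θ' ∈ Θ, ChainLE θ' θ → Aw θ ⊆ Aw θ'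

/-- Validity: φ holds at every world of every epistemic model with awareness. -/
def Valid (Θ : Set (Chain G)) (φ : Formula P G) : Prop :=
  ∀ M : AwModel P G Θ, ∀ w : M.W, Sat M.toRawModel φ w


/-- Conjunction of a nonempty list of formulas, given as head and tail. -/
def conjList (f : Formula P G) : List (Formula P G) → Formula P G
  | [] => f
  | g :: l => f.and (conjList g l)

/-- Boolean evaluation of the propositional skeleton of a formula, treating
non-Boolean formulas as propositional atoms. -/
def propEval (v : Formula P G → Bool) : Formula P G → Bool
  | .neg φ => !(propEval v φ)
  | .and φ ψ => propEval v φ && propEval v ψ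
  | φ => v φ

/-- φ is a propositional tautology. -/
def Tautology (φ : Formula P G) : Prop := ∀ v, propEval v φ = true

/-- The Hilbert system ALPC. -/
inductive Provable (Θ : Set (Chain G)) : Formula P G → Prop
  | taut {φ : Formula P G} : Tautology φ → WF Θ φ → Provable Θ φ
  | AN {θ : Chain G} {φ : Formula P G} :
      WF Θ ((Formula.A θ φ).iff (Formula.A θ φ.neg)) →
      Provable Θ ((Formula.A θ φ).iff (Formula.A θ φ.neg))
  | ACN {θ : Chain G} {φ ψ : Formula P G} :
      WF Θ ((Formula.A θ (φ.and ψ)).iff ((Formula.A θ φ).and (Formula.A θ ψ))) →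
      Provable Θ ((Formula.A θ (φ.and ψ)).iff ((Formula.A θ φ).and (Formula.A θ ψ)))
  | AA {θ θ' : Chain G} {φ : Formula P G} :
      WF Θ ((Formula.A θ φ).iff (Formula.A θ (Formula.A θ' φ))) →
      Provable Θ ((Formula.A θ φ).iff (Formula.A θ (Formula.A θ' φ)))
  | AL {θ : Chain G} {i : G} {φ : Formula P G} :
      WF Θ ((Formula.A θ φ).iff (Formula.A θ (Formula.K i φ))) →
      Provable Θ ((Formula.A θ φ).iff (Formula.A θ (Formula.K i φ)))
  | Abox {θ θ' : Chain G} {φ : Formula P G} :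
      WF Θ ((Formula.A θ φ).iff (Formula.A θ (Formula.box θ' φ))) →
      Provable Θ ((Formula.A θ φ).iff (Formula.A θ (Formula.box θ' φ)))
  | ACM {θ θ' : Chain G} {φ : Formula P G} :
      WF Θ ((Formula.A θ φ).iff (Formula.A θ (Formula.C θ' φ))) →
      Provable Θ ((Formula.A θ φ).iff (Formula.A θ (Formula.C θ' φ)))
  | AK {θ θ' : Chain G} {φ : Formula P G} :
      WF Θ ((Formula.A θ φ).iff (Formula.A θ (Formula.E θ' φ))) →
      Provable Θ ((Formula.A θ φ).iff (Formula.A θ (Formula.E θ' φ)))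
  | ANbox {θ : Chain G} {p : P} :
      WF Θ (((Formula.A θ (Formula.atom p)).and (Formula.atom p)).imp
        (Formula.box θ (Formula.atom p))) →
      Provable Θ (((Formula.A θ (Formula.atom p)).and (Formula.atom p)).imp
        (Formula.box θ (Formula.atom p)))
  | AI {θ θ' : Chain G} {φ : Formula P G} :
      ChainLE θ' θ →
      WF Θ ((Formula.A θ φ).imp (Formula.A θ' φ)) →
      Provable Θ ((Formula.A θ φ).imp (Formula.A θ' φ))
  | KA {θ : Chain G} {φ : Formula P G} (θ₀ : Chain G) (l : List (Chain G)) :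
      (∀ x, x ∈ θ₀ :: l ↔ x ∈ Θ) →
      WF Θ (Formula.A θ φ) →
      Provable Θ ((Formula.A θ φ).imp
        (conjList (Formula.C θ₀ (Formula.A θ φ))
          (l.map fun θ' => Formula.C θ' (Formula.A θ φ))))
  | NKA {θ : Chain G} {φ : Formula P G} (θ₀ : Chain G) (l : List (Chain G)) :
      (∀ x, x ∈ θ₀ :: l ↔ x ∈ Θ) →
      WF Θ (Formula.A θ φ) →
      Provable Θ (((Formula.A θ φ).neg).imp
        (conjList (Formula.C θ₀ ((Formula.A θ φ).neg))
          (l.map fun θ' => Formula.C θ' ((Formula.A θ φ).neg))))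
  | K_I {i : G} {φ ψ : Formula P G} :
      WF Θ ((Formula.K i (φ.imp ψ)).imp ((Formula.K i φ).imp (Formula.K i ψ))) →
      Provable Θ ((Formula.K i (φ.imp ψ)).imp ((Formula.K i φ).imp (Formula.K i ψ)))
  | T_I {i : G} {φ : Formula P G} :
      WF Θ ((Formula.K i φ).imp φ) →
      Provable Θ ((Formula.K i φ).imp φ)
  | five_I {i : G} {φ : Formula P G} :
      WF Θ (((Formula.K i φ).neg).imp (Formula.K i ((Formula.K i φ).neg))) →
      Provable Θ (((Formula.K i φ).neg).imp (Formula.K i ((Formula.K i φ).neg)))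
  | K_box {θ : Chain G} {φ ψ : Formula P G} :
      WF Θ ((Formula.box θ (φ.imp ψ)).imp ((Formula.box θ φ).imp (Formula.box θ ψ))) →
      Provable Θ ((Formula.box θ (φ.imp ψ)).imp ((Formula.box θ φ).imp (Formula.box θ ψ)))
  | T_box {θ : Chain G} {φ : Formula P G} :
      WF Θ ((Formula.box θ φ).imp φ) →
      Provable Θ ((Formula.box θ φ).imp φ)
  | five_box {θ : Chain G} {φ : Formula P G} :
      WF Θ (((Formula.box θ φ).neg).imp (Formula.box θ ((Formula.box θ φ).neg))) →
      Provable Θ (((Formula.box θ φ).neg).imp (Formula.box θ ((Formula.box θ φ).neg)))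
  | K_C {θ : Chain G} {φ ψ : Formula P G} :
      WF Θ ((Formula.C θ (φ.imp ψ)).imp ((Formula.C θ φ).imp (Formula.C θ ψ))) →
      Provable Θ ((Formula.C θ (φ.imp ψ)).imp ((Formula.C θ φ).imp (Formula.C θ ψ)))
  | MIX {θ : Chain G} {φ : Formula P G} :
      WF Θ ((Formula.C θ φ).imp
        (φ.and (Formula.box θ (Formula.K (Chain.last θ) (Formula.C θ φ))))) →
      Provable Θ ((Formula.C θ φ).imp
        (φ.and (Formula.box θ (Formula.K (Chain.last θ) (Formula.C θ φ)))))
  | IND {θ : Chain G} {φ : Formula P G} :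
      WF Θ ((Formula.C θ (φ.imp (Formula.box θ (Formula.K (Chain.last θ) φ)))).imp
        (φ.imp (Formula.C θ φ))) →
      Provable Θ ((Formula.C θ (φ.imp (Formula.box θ (Formula.K (Chain.last θ) φ)))).imp
        (φ.imp (Formula.C θ φ)))
  | KAC {θ : Chain G} {φ : Formula P G} :
      WF Θ ((Formula.E θ φ).iff ((Formula.A θ φ).and (Formula.C θ φ))) →
      Provable Θ ((Formula.E θ φ).iff ((Formula.A θ φ).and (Formula.C θ φ)))
  | mp {φ ψ : Formula P G} : Provable Θ (φ.imp ψ) → Provable Θ φ → Provable Θ ψ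
  | necK {i : G} {φ : Formula P G} : Provable Θ φ → Provable Θ (Formula.K i φ)
  | necBox {θ : Chain G} {φ : Formula P G} : θ ∈ Θ → Provable Θ φ → Provable Θ (Formula.box θ φ)
  | necC {θ : Chain G} {φ : Formula P G} : θ ∈ Θ → Provable Θ φ → Provable Θ (Formula.C θ φ)

/-- Γ ⊢ φ: there is a finite subset Γ' of Γ with ⊢ ⋀Γ' → φ. -/
def Deduces (Θ : Set (Chain G)) (Γ : Set (Formula P G)) (φ : Formula P G) : Prop :=
  Provable Θ φ ∨ ∃ (ψ : Formula P G) (l : List (Formula P G)),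
    ψ ∈ Γ ∧ (∀ χ ∈ l, χ ∈ Γ) ∧ Provable Θ ((conjList ψ l).imp φ)

/-- Γ ⊢ ⊥: Γ deduces a contradiction. -/
def Inconsistent (Θ : Set (Chain G)) (Γ : Set (Formula P G)) : Prop :=
  ∃ χ, Deduces Θ Γ χ ∧ Deduces Θ Γ χ.neg

/-- Γ is a consistent set in Φ. -/
def ConsistentIn (Θ : Set (Chain G)) (Φ Γ : Set (Formula P G)) : Prop :=
  Γ ⊆ Φ ∧ ¬ Inconsistent Θ Γ

/-- Γ is a maximal consistent set in Φ: no consistent set in Φ properly contains Γ. -/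
def MCSIn (Θ : Set (Chain G)) (Φ Γ : Set (Formula P G)) : Prop :=
  ConsistentIn Θ Φ Γ ∧ ∀ Δ, ConsistentIn Θ Φ Δ → Γ ⊆ Δ → Δ = Γ

/-- Subformula relation: `Subf χ φ` means χ is a subformula of φ. -/
inductive Subf : Formula P G → Formula P G → Prop
  | refl (φ : Formula P G) : Subf φ φ
  | neg {χ φ : Formula P G} : Subf χ φ → Subf χ (Formula.neg φ)
  | andL {χ φ ψ : Formula P G} : Subf χ φ → Subf χ (Formula.and φ ψ)
  | andR {χ φ ψ : Formula P G} : Subf χ ψ → Subf χ (Formula.and φ ψ)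
  | K {χ φ : Formula P G} {i : G} : Subf χ φ → Subf χ (Formula.K i φ)
  | box {χ φ : Formula P G} {θ : Chain G} : Subf χ φ → Subf χ (Formula.box θ φ)
  | C {χ φ : Formula P G} {θ : Chain G} : Subf χ φ → Subf χ (Formula.C θ φ)
  | A {χ φ : Formula P G} {θ : Chain G} : Subf χ φ → Subf χ (Formula.A θ φ)
  | E {χ φ : Formula P G} {θ : Chain G} : Subf χ φ → Subf χ (Formula.E θ φ)

/-- φ has the form of a negation. -/
def Formula.isNeg : Formula P G → Prop
  | .neg _ => True
  | _ => False

/-- The closure cl(φ), as an inductively generated (hence smallest) set. -/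
inductive InCl (Θ : Set (Chain G)) (φ : Formula P G) : Formula P G → Prop
  | self : InCl Θ φ φ
  | sub {ψ χ : Formula P G} : InCl Θ φ ψ → Subf χ ψ → InCl Θ φ χ
  | neg {ψ : Formula P G} : InCl Θ φ ψ → ¬ Formula.isNeg ψ → InCl Θ φ (Formula.neg ψ)
  | CA {θ : Chain G} {ψ : Formula P G} (θ' : Chain G) :
      InCl Θ φ (Formula.A θ ψ) → θ' ∈ Θ → InCl Θ φ (Formula.C θ' (Formula.A θ ψ))
  | CnA {θ : Chain G} {ψ : Formula P G} (θ' : Chain G) :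
      InCl Θ φ (Formula.A θ ψ) → θ' ∈ Θ →
      InCl Θ φ (Formula.C θ' (Formula.neg (Formula.A θ ψ)))
  | boxAtom {θ : Chain G} {ψ : Formula P G} {p : P} :
      InCl Θ φ (Formula.A θ ψ) → InCl Θ φ (Formula.atom p) →
      InCl Θ φ (Formula.box θ (Formula.atom p))
  | Asub {θ : Chain G} {ψ χ : Formula P G} :
      InCl Θ φ (Formula.A θ ψ) → Subf χ ψ → InCl Θ φ (Formula.A θ χ)
  | Achain {θ : Chain G} {ψ : Formula P G} (θ' : Chain G) :
      InCl Θ φ (Formula.A θ ψ) → θ' ∈ Θ → InCl Θ φ (Formula.A θ' ψ)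
  | KK {i : G} {ψ : Formula P G} :
      Subf (Formula.K i ψ) φ → InCl Θ φ (Formula.K i (Formula.K i ψ))
  | KnK {i : G} {ψ : Formula P G} :
      Subf (Formula.K i ψ) φ → InCl Θ φ (Formula.K i (Formula.neg (Formula.K i ψ)))
  | boxbox {θ : Chain G} {ψ : Formula P G} :
      Subf (Formula.box θ ψ) φ → InCl Θ φ (Formula.box θ (Formula.box θ ψ))
  | boxnbox {θ : Chain G} {ψ : Formula P G} :
      Subf (Formula.box θ ψ) φ → InCl Θ φ (Formula.box θ (Formula.neg (Formula.box θ ψ)))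
  | CboxKC {θ : Chain G} {ψ : Formula P G} :
      InCl Θ φ (Formula.C θ ψ) →
      InCl Θ φ (Formula.box θ (Formula.K (Chain.last θ) (Formula.C θ ψ)))
  | KC1 {i : G} {θ : Chain G} {ψ : Formula P G} :
      InCl Θ φ (Formula.K i (Formula.C θ ψ)) →
      InCl Θ φ (Formula.K i (Formula.K i (Formula.C θ ψ)))
  | KC2 {i : G} {θ : Chain G} {ψ : Formula P G} :
      InCl Θ φ (Formula.K i (Formula.C θ ψ)) →
      InCl Θ φ (Formula.K i (Formula.neg (Formula.K i (Formula.C θ ψ))))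
  | boxKC1 {θ : Chain G} {i : G} {ψ : Formula P G} :
      InCl Θ φ (Formula.box θ (Formula.K i (Formula.C θ ψ))) →
      InCl Θ φ (Formula.box θ (Formula.box θ (Formula.K i (Formula.C θ ψ))))
  | boxKC2 {θ : Chain G} {i : G} {ψ : Formula P G} :
      InCl Θ φ (Formula.box θ (Formula.K i (Formula.C θ ψ))) →
      InCl Θ φ (Formula.box θ (Formula.neg (Formula.box θ (Formula.K i (Formula.C θ ψ)))))
  | EA {θ : Chain G} {ψ : Formula P G} : InCl Θ φ (Formula.E θ ψ) → InCl Θ φ (Formula.A θ ψ)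
  | EC {θ : Chain G} {ψ : Formula P G} : InCl Θ φ (Formula.E θ ψ) → InCl Θ φ (Formula.C θ ψ)

/-- The closure cl(φ) as a set of formulas. -/
def cl (Θ : Set (Chain G)) (φ : Formula P G) : Set (Formula P G) := {ψ | InCl Θ φ ψ}

/-- (Γ,Δ) ∈ (∼_i)*: {χ | I_iχ ∈ Γ} ⊆ Δ. -/
def simStar (i : G) (Γ Δ : Set (Formula P G)) : Prop := ∀ χ, Formula.K i χ ∈ Γ → χ ∈ Δ

/-- (Γ,Δ) ∈ (≈_θ)*: {χ | [≈]_θχ ∈ Γ} ⊆ Δ. -/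
def boxStar (θ : Chain G) (Γ Δ : Set (Formula P G)) : Prop :=
  ∀ χ, Formula.box θ χ ∈ Γ → χ ∈ Δ

/-- The union over i ∈ G and θ ∈ Θ of the compositions (∼_i)* ∘ (≈_θ)* on
maximal consistent sets in Φ. -/
def baseRel (Θ : Set (Chain G)) (Φ : Set (Formula P G)) (X Y : Set (Formula P G)) : Prop :=
  ∃ i : G, ∃ θ ∈ Θ, ∃ U, MCSIn Θ Φ U ∧ boxStar θ X U ∧ simStar i U Y

/-- The domain W*_Λ of the divided model M*_Λ. -/
def WL (Θ : Set (Chain G)) (Φ Λ : Set (Formula P G)) : Set (Set (Formula P G)) :=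
  {Γ | MCSIn Θ Φ Γ ∧ Relation.TransGen (baseRel Θ Φ) Λ Γ}

/-- One step of a (C_θ)_Λ-path: the composition (∼_i)*_Λ ∘ (≈_θ)*_Λ
(i the last agent of θ) restricted to W*_Λ. -/
def stepL (Θ : Set (Chain G)) (Φ Λ : Set (Formula P G)) (θ : Chain G)
    (X Y : Set (Formula P G)) : Prop :=
  X ∈ WL Θ Φ Λ ∧ Y ∈ WL Θ Φ Λ ∧
    ∃ U ∈ WL Θ Φ Λ, boxStar θ X U ∧ simStar (Chain.last θ) U Y

/-- The divided model M*_Λ (as raw model data), with relations (∼_i)*_Λ,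
awareness sets (𝒜_θ)*_Λ and valuation V*_Λ. -/
def dividedModel (Θ : Set (Chain G)) (Φ Λ : Set (Formula P G)) : RawModel P G where
  W := {Γ : Set (Formula P G) // Γ ∈ WL Θ Φ Λ}
  sim i x y := simStar i x.val y.val
  V p := {x | Formula.atom p ∈ x.val}
  Aw θ := {p | ∀ Γ ∈ WL Θ Φ Λ, Formula.A θ (Formula.atom p) ∈ Γ}

/-! Every C_θ-path from w is a chain of steps "≈_θ then ∼_i". The hypothesis makes φ stable
under one such step taken from any world on a path, and from w itself since ≈_θ and ∼_i are
reflexive; induction along the path then carries φ from w to its end. -/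

theorem sat_imp (M : RawModel P G) {φ ψ : Formula P G} {w : M.W} :
    Sat M (φ.imp ψ) w ↔ (Sat M φ w → Sat M ψ w) := by
  simp only [Formula.imp, Sat]
  tauto

theorem RawModel.indist_refl (M : RawModel P G) (θ : Chain G) (w : M.W) : M.indist θ w w :=
  fun _ _ => Iff.rfl

theorem RawModel.creach_refl (M : RawModel P G) {θ : Chain G} (h : ∀ x, M.sim θ.last x x)
    (w : M.W) : M.creach θ w w :=
  .single ⟨w, M.indist_refl θ w, h w⟩

theorem RawModel.sat_IND_of_creach_self (M : RawModel P G) {θ : Chain G} {φ : Formula P G}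
    {w : M.W} (hw : M.creach θ w w) :
    Sat M ((Formula.C θ (φ.imp (Formula.box θ (Formula.K θ.last φ)))).imp
      (φ.imp (Formula.C θ φ))) w := by
  rw [sat_imp, sat_imp]
  intro hC hφ
  have propagate : ∀ v, M.creach θ w v → Sat M φ v →
      ∀ u, (∃ x, M.indist θ v x ∧ M.sim θ.last x u) → Sat M φ u :=
    fun v hv hφv u ⟨x, hvx, hxu⟩ => (sat_imp M).mp (hC v hv) hφv x hvx u hxu
  intro v hv
  induction hv with
  | single hstep => exact propagate w hw hφ _ hstep
  | tail hwb hstep ih => exact propagate _ hwb ih _ hstep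

theorem IND_valid_general {P G : Type}
    {Θ : Set (Chain G)} (θ : Chain G) (φ : Formula P G) :
    Valid Θ ((Formula.C θ (φ.imp (Formula.box θ (Formula.K (Chain.last θ) φ)))).imp
      (φ.imp (Formula.C θ φ))) := fun M w =>
  M.sat_IND_of_creach_self (M.creach_refl (M.sim_equiv θ.last).refl w)

/-- the induction axiom IND is valid:
C_θ(φ → [≈]_θ I_i φ) → (φ → C_θφ), i the last agent of θ. -/
theorem IND_valid {P G : Type} [Countable P] [Finite G]
    {Θ : Set (Chain G)} (hΘ : Θ.Finite) (θ : Chain G) (hθ : θ ∈ Θ) (φ : Formula P G)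
    (hwf : WF Θ ((Formula.C θ (φ.imp (Formula.box θ (Formula.K (Chain.last θ) φ)))).imp
      (φ.imp (Formula.C θ φ)))) :
    Valid Θ ((Formula.C θ (φ.imp (Formula.box θ (Formula.K (Chain.last θ) φ)))).imp
      (φ.imp (Formula.C θ φ))) :=
  IND_valid_general θ φ

end ALPC
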